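/- arXiv:1005.0177 — 2 statements merged into one kernel-verified Lean document; each statement's English description precedes it below -/
import Mathlib

section
/- For every integer n ≥ 1 and all a, b ∈ ℚ, Σ_{i=0}^{n} C(n,i) · B_i(a) · B_{n−i}(b) = (1−n) · B_n(a+b) + n·(a+b−1) · B_{n−1}(a+b), where B_k denotes the k-th Bernoulli polynomial. -/
open Finset

open PowerSeries Polynomial
noncomputable def Fb (t : ℚ) : ℚ⟦X⟧ :=
  PowerSeries.mk fun n => Polynomial.aeval t ((1 / n.factorial : ℚ) • Polynomial.bernoulli n)

lemma Fb_gen (t : ℚ) : Fb t * (exp ℚ - 1) = PowerSeries.X * rescale t (exp ℚ) :=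
  Polynomial.bernoulli_generating_function t

lemma coeff_Fb (t : ℚ) (n : ℕ) :
    PowerSeries.coeff n (Fb t) = (1 / n.factorial : ℚ) * (Polynomial.bernoulli n).eval t := by
  simp [Fb, Polynomial.coe_aeval_eq_eval]

lemma D_exp : PowerSeries.derivative ℚ (exp ℚ) = exp ℚ := by
  ext n
  simp [PowerSeries.coeff_derivative, PowerSeries.coeff_exp, Nat.factorial_succ]
  field_simp

lemma D_rescale_exp (t : ℚ) :
    PowerSeries.derivative ℚ (rescale t (exp ℚ)) = PowerSeries.C t * rescale t (exp ℚ) := by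
  ext n
  simp [PowerSeries.coeff_derivative, PowerSeries.coeff_rescale, PowerSeries.coeff_exp,
    Nat.factorial_succ, pow_succ]
  field_simp

lemma exp_sub_one_ne : (exp ℚ - 1 : ℚ⟦X⟧) ≠ 0 := by
  intro h
  have := congrArg (PowerSeries.coeff 1) h
  simp [PowerSeries.coeff_exp] at this

lemma key (a b : ℚ) :
    Fb a * Fb b =
      Fb (a + b) - PowerSeries.X * PowerSeries.derivative ℚ (Fb (a + b)) +
        (PowerSeries.C (a + b) - 1) * (PowerSeries.X * Fb (a + b)) := by
  set x := a + b with hx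
  set E : ℚ⟦X⟧ := rescale x (exp ℚ) with hE
  have h1 : Fb x * (exp ℚ - 1) = PowerSeries.X * E := Fb_gen x
  have hD : PowerSeries.derivative ℚ (Fb x) * (exp ℚ - 1)
      = E + PowerSeries.C x * PowerSeries.X * E - Fb x * exp ℚ := by
    have h2 := congrArg (PowerSeries.derivative ℚ) h1
    rw [Derivation.leibniz, Derivation.leibniz] at h2
    simp only [map_sub, map_one, D_exp, sub_zero, Derivation.map_one_eq_zero, mul_zero, zero_add, PowerSeries.derivative_X, smul_eq_mul,
      mul_one, hE, D_rescale_exp] at h2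
    linear_combination h2
  apply mul_right_cancel₀ (pow_ne_zero 2 exp_sub_one_ne)
  have h1a : Fb a * (exp ℚ - 1) = PowerSeries.X * rescale a (exp ℚ) := Fb_gen a
  have h1b : Fb b * (exp ℚ - 1) = PowerSeries.X * rescale b (exp ℚ) := Fb_gen b
  have hEE : rescale a (exp ℚ) * rescale b (exp ℚ) = E := by
    rw [hE, hx]; exact PowerSeries.exp_mul_exp_eq_exp_add a b
  have lhs : Fb a * Fb b * (exp ℚ - 1) ^ 2 = PowerSeries.X ^ 2 * E := by
    linear_combination (Fb b * (exp ℚ - 1)) * h1a + (PowerSeries.X * rescale a (exp ℚ)) * h1b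
      + PowerSeries.X ^ 2 * hEE
  rw [lhs]
  linear_combination (-(((exp ℚ - 1) + (PowerSeries.C x - 1) * PowerSeries.X * (exp ℚ - 1)
      + PowerSeries.X * exp ℚ))) * h1 + (PowerSeries.X * (exp ℚ - 1)) * hD


/-- For every `n ≥ 1` and `a b : ℚ`,
`∑_{i=0}^{n} C(n,i) · B_i(a) · B_{n−i}(b) = (1−n) · B_n(a+b) + n(a+b−1) · B_{n−1}(a+b)`. -/
theorem bernoulli_polynomial_convolution (n : ℕ) (hn : 1 ≤ n) (a b : ℚ) :
    ∑ i ∈ range (n + 1), (n.choose i : ℚ) * (Polynomial.bernoulli i).eval a *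
        (Polynomial.bernoulli (n - i)).eval b =
      (1 - (n : ℚ)) * (Polynomial.bernoulli n).eval (a + b) +
        (n : ℚ) * (a + b - 1) * (Polynomial.bernoulli (n - 1)).eval (a + b) := by
  obtain ⟨m, rfl⟩ : ∃ m, n = m + 1 := ⟨n - 1, (Nat.succ_pred_eq_of_pos hn).symm⟩
  have h := congrArg (PowerSeries.coeff (m + 1)) (key a b)
  rw [PowerSeries.coeff_mul, Nat.sum_antidiagonal_eq_sum_range_succ_mk] at h
  simp only [map_add, map_sub, PowerSeries.coeff_succ_X_mul, PowerSeries.coeff_derivative,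
    sub_mul, add_mul, one_mul, PowerSeries.coeff_C_mul, coeff_Fb] at h
  simp only [Nat.add_sub_cancel]
  have hm : (m.factorial : ℚ) ≠ 0 := Nat.cast_ne_zero.2 m.factorial_ne_zero
  have hm1 : ((m + 1).factorial : ℚ) ≠ 0 := Nat.cast_ne_zero.2 (m + 1).factorial_ne_zero
  calc ∑ i ∈ range (m + 1 + 1), ((m + 1).choose i : ℚ) * (Polynomial.bernoulli i).eval a *
        (Polynomial.bernoulli (m + 1 - i)).eval b
      = ((m + 1).factorial : ℚ) * ∑ i ∈ range (m + 1 + 1),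
          (1 / (i.factorial : ℚ) * (Polynomial.bernoulli i).eval a) *
          (1 / ((m + 1 - i).factorial : ℚ) * (Polynomial.bernoulli (m + 1 - i)).eval b) := by
        rw [mul_sum]
        refine sum_congr rfl fun i hi => ?_
        have hle : i ≤ m + 1 := by simpa using Nat.lt_succ_iff.mp (mem_range.mp hi)
        have hfact : (((m + 1).choose i : ℕ) : ℚ) * (i.factorial : ℚ) *
            ((m + 1 - i).factorial : ℚ) = ((m + 1).factorial : ℚ) := by
          exact_mod_cast congrArg (Nat.cast (R := ℚ))
            (Nat.choose_mul_factorial_mul_factorial hle)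
        have hi1 : (i.factorial : ℚ) ≠ 0 := Nat.cast_ne_zero.2 i.factorial_ne_zero
        have hi2 : (((m + 1 - i).factorial : ℕ) : ℚ) ≠ 0 :=
          Nat.cast_ne_zero.2 (m + 1 - i).factorial_ne_zero
        field_simp
        linear_combination ((Polynomial.bernoulli i).eval a *
          (Polynomial.bernoulli (m + 1 - i)).eval b) * hfact
    _ = ((m + 1).factorial : ℚ) *
          (1 / ((m + 1).factorial : ℚ) * (Polynomial.bernoulli (m + 1)).eval (a + b) -
           1 / ((m + 1).factorial : ℚ) * (Polynomial.bernoulli (m + 1)).eval (a + b) * (m + 1) +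
           (a * (1 / (m.factorial : ℚ) * (Polynomial.bernoulli m).eval (a + b)) +
            b * (1 / (m.factorial : ℚ) * (Polynomial.bernoulli m).eval (a + b)) -
            1 / (m.factorial : ℚ) * (Polynomial.bernoulli m).eval (a + b))) := by
        rw [h]
    _ = (1 - ((m + 1 : ℕ) : ℚ)) * (Polynomial.bernoulli (m + 1)).eval (a + b) +
          ((m + 1 : ℕ) : ℚ) * (a + b - 1) * (Polynomial.bernoulli m).eval (a + b) := by
        have hfs : ((m + 1).factorial : ℚ) = ((m : ℚ) + 1) * (m.factorial : ℚ) := by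
          rw [Nat.factorial_succ]; push_cast; ring
        push_cast
        rw [hfs]
        field_simp
end

section
/- Rademacher's identity: for every integer n ≥ 4, Σ_{i=2}^{n−2} ((2n−2)!/((2i−2)!·(2n−2i−2)!)) · (B_{2i}/(2i)) · (B_{2n−2i}/(2n−2i)) = −((2n+1)(n−3)/(6n)) · B_{2n}, where B_k denotes the k-th Bernoulli number. -/
open Finset

open PowerSeries

noncomputable def Bps : ℚ⟦X⟧ := bernoulliPowerSeries ℚ
noncomputable def Gps : ℚ⟦X⟧ := 2 * Bps - 2 + X
noncomputable abbrev G1 : ℚ⟦X⟧ := d⁄dX ℚ Gps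
noncomputable abbrev G2 : ℚ⟦X⟧ := d⁄dX ℚ G1
noncomputable abbrev G3 : ℚ⟦X⟧ := d⁄dX ℚ G2

lemma exp_deriv : d⁄dX ℚ (exp ℚ) = exp ℚ := by
  ext n
  rw [PowerSeries.coeff_derivative]
  simp [PowerSeries.coeff_exp, Nat.factorial_succ]
  field_simp

lemma deriv_num (n : ℕ) [n.AtLeastTwo] : d⁄dX ℚ (OfNat.ofNat n : ℚ⟦X⟧) = 0 := by
  rw [(map_ofNat (C (R := ℚ)) n).symm]; exact derivative_C

lemma deriv_two : d⁄dX ℚ (2 : ℚ⟦X⟧) = 0 := deriv_num 2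

lemma hB : Bps ^ 2 = Bps - X * Bps - X * (d⁄dX ℚ Bps) := by
  have hx : Bps * (exp ℚ - 1) = X := bernoulliPowerSeries_mul_exp_sub_one ℚ
  have hd := congrArg (d⁄dX ℚ) hx
  rw [Derivation.leibniz, map_sub, exp_deriv, Derivation.map_one_eq_zero, sub_zero,
    derivative_X, smul_eq_mul, smul_eq_mul] at hd
  linear_combination Bps * hd - (d⁄dX ℚ Bps) * hx - Bps * hx

lemma hG : Gps ^ 2 = X ^ 2 - 2 * Gps - 2 * (X * G1) := by
  have hdg : G1 = 2 * d⁄dX ℚ Bps + 1 := by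
    unfold G1 Gps
    rw [map_add, map_sub, Derivation.leibniz, deriv_two, derivative_X, smul_eq_mul, smul_eq_mul]
    ring
  rw [hdg]
  unfold Gps
  linear_combination 4 * hB

lemma hR1 : 2 * (Gps * G1) = 2 * X - 4 * G1 - 2 * (X * G2) := by
  have hd := congrArg (d⁄dX ℚ) hG
  simp only [map_sub, map_add, Derivation.leibniz, Derivation.leibniz_pow, deriv_two, deriv_num,
    derivative_X, smul_eq_mul, smul_eq_mul, nsmul_eq_mul, pow_one, mul_one,
    Nat.cast_ofNat, map_mul] at hd
  linear_combination hd

lemma hG3 : Gps ^ 3 = X ^ 2 * Gps + 4 * Gps + 8 * (X * G1) + 2 * (X ^ 2 * G2) - 4 * X ^ 2 := by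
  linear_combination (Gps - 2) * hG - X * hR1

lemma hXsq : X * (6 * G1 ^ 2) = X * (2 - 2 * Gps + 2 * (X * G1) - 6 * G2 - 2 * (X * G3)) := by
  have hd := congrArg (d⁄dX ℚ) hG3
  have d4 : d⁄dX ℚ (4 : ℚ⟦X⟧) = 0 := deriv_num 4
  have d8 : d⁄dX ℚ (8 : ℚ⟦X⟧) = 0 := deriv_num 8
  simp only [map_sub, map_add, Derivation.leibniz, Derivation.leibniz_pow, deriv_two, d4, d8,
    derivative_X, smul_eq_mul, smul_eq_mul, nsmul_eq_mul, pow_one, mul_one,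
    Nat.cast_ofNat, map_mul] at hd
  linear_combination 3 * G1 * hG - hd - 3 * hR1

lemma hsq : 6 * G1 ^ 2 = 2 - 2 * Gps + 2 * (X * G1) - 6 * G2 - 2 * (X * G3) :=
  mul_left_cancel₀ X_ne_zero hXsq

lemma hfin : 6 * (X * G1 - Gps) ^ 2 =
    -2 * (X ^ 3 * G3) + 6 * (X ^ 2 * G2) - 2 * (X ^ 2 * Gps) + 2 * (X ^ 3 * G1)
      + 12 * (X * G1) - 12 * Gps - 4 * X ^ 2 := by
  linear_combination X ^ 2 * hsq - 6 * X * hR1 + 6 * hG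

lemma cB (m : ℕ) : coeff m Bps = bernoulli m / m.factorial := by
  simp [Bps, bernoulliPowerSeries]

lemma cG {m : ℕ} (hm : 2 ≤ m) : coeff m Gps = 2 * bernoulli m / m.factorial := by
  unfold Gps
  rw [map_add, map_sub, (map_ofNat (C (R := ℚ)) 2).symm, coeff_C_mul, coeff_C, coeff_X, cB,
    if_neg (by omega), if_neg (by omega)]
  ring

lemma cG0 : coeff 0 Gps = 0 := by
  unfold Gps
  rw [map_add, map_sub, (map_ofNat (C (R := ℚ)) 2).symm, coeff_C_mul, coeff_C, coeff_X, cB]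
  norm_num

lemma cG1 : coeff 1 Gps = 0 := by
  unfold Gps
  rw [map_add, map_sub, (map_ofNat (C (R := ℚ)) 2).symm, coeff_C_mul, coeff_C, coeff_X, cB]
  norm_num [bernoulli_one]

lemma cA (m : ℕ) : coeff m (X * G1 - Gps) = ((m : ℚ) - 1) * coeff m Gps := by
  rw [map_sub]
  cases m with
  | zero => rw [coeff_zero_X_mul, cG0]; ring
  | succ k =>
      rw [coeff_succ_X_mul, PowerSeries.coeff_derivative]
      push_cast
      ring

lemma bernoulli_odd {m : ℕ} (h1 : Odd m) (h2 : 3 ≤ m) : bernoulli m = 0 := by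
  rw [bernoulli_eq_bernoulli'_of_ne_one (by omega)]
  exact bernoulli'_eq_zero_of_odd h1 (by omega)

open Finset in
lemma conv (k : ℕ) :
    coeff (2*k+8) ((X * G1 - Gps)^2) =
      coeff 2 (X * G1 - Gps) * coeff (2*k+6) (X * G1 - Gps)
      + coeff (2*k+6) (X * G1 - Gps) * coeff 2 (X * G1 - Gps)
      + ∑ i ∈ Icc 2 (k+2),
          coeff (2*i) (X * G1 - Gps) * coeff (2*k+8-2*i) (X * G1 - Gps) := by
  rw [sq, coeff_mul, Finset.Nat.sum_antidiagonal_eq_sum_range_succ_mk]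
  have hsub : (Icc 1 (k+3)).image (fun i => 2*i) ⊆ range (2*k+8+1) := by
    intro x hx
    simp only [mem_image, mem_Icc] at hx
    obtain ⟨i, hi, rfl⟩ := hx
    simp only [mem_range]
    omega
  have hzero : ∀ j ∈ range (2*k+8+1), j ∉ (Icc 1 (k+3)).image (fun i => 2*i) →
      coeff j (X * G1 - Gps) * coeff (2*k+8-j) (X * G1 - Gps) = 0 := by
    intro j hj hnot
    simp only [mem_range] at hj
    rcases Nat.even_or_odd j with ⟨i, rfl⟩ | ho
    · have hi : i = 0 ∨ i = k + 4 := by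
        by_contra hc
        push_neg at hc
        exact hnot (mem_image.2 ⟨i, mem_Icc.2 (by omega), by omega⟩)
      rcases hi with rfl | rfl
      · norm_num [cA, cG0]
      · have : 2*k+8 - (k+4+(k+4)) = 0 := by omega
        rw [this, cA 0, cG0]
        ring
    · rcases Nat.lt_or_ge j 3 with hj3 | hj3
      · have : j = 1 := by
          rcases ho with ⟨m, rfl⟩; omega
        subst this
        rw [cA 1, cG1]
        push_cast
        ring
      · rw [cA j, cG (by omega), bernoulli_odd ho hj3]
        ring
  rw [← Finset.sum_subset hsub hzero,
    Finset.sum_image (by intro x _ y _ h; simp only at h; omega)]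
  have hsplit : Icc 1 (k+3) = insert 1 (insert (k+3) (Icc 2 (k+2))) := by
    ext x
    simp only [mem_Icc, mem_insert]
    omega
  rw [hsplit, Finset.sum_insert (by simp only [mem_insert, mem_Icc]; omega),
    Finset.sum_insert (by simp only [mem_Icc]; omega)]
  have e1 : 2*k+8 - 2*1 = 2*k+6 := by omega
  have e2 : 2*k+8 - 2*(k+3) = 2 := by omega
  rw [e1, e2]
  ring_nf

lemma coeff_num_mul (m : ℕ) (q : ℕ) [q.AtLeastTwo] (f : ℚ⟦X⟧) :
    coeff m ((OfNat.ofNat q : ℚ⟦X⟧) * f) = (OfNat.ofNat q : ℚ) * coeff m f := by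
  rw [← map_ofNat (C (R := ℚ)) q, coeff_C_mul]

lemma hfin2 : C (6 : ℚ) * ((X * G1 - Gps) ^ 2) + C (2 : ℚ) * (X ^ 3 * G3) + C (2 : ℚ) * (X ^ 2 * Gps)
      + C (12 : ℚ) * Gps + C (4 : ℚ) * (X ^ 2 : ℚ⟦X⟧)
    = C (6 : ℚ) * (X ^ 2 * G2) + C (2 : ℚ) * (X ^ 3 * G1) + C (12 : ℚ) * (X * G1) := by
  rw [map_ofNat (C (R := ℚ)) 6, map_ofNat (C (R := ℚ)) 2, map_ofNat (C (R := ℚ)) 12, map_ofNat (C (R := ℚ)) 4]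
  linear_combination hfin

/-- Rademacher's identity: for every integer `n ≥ 4`,
`∑_{i=2}^{n−2} ((2n−2)!/((2i−2)!(2n−2i−2)!)) · (B_{2i}/(2i)) · (B_{2n−2i}/(2n−2i))
  = −((2n+1)(n−3)/(6n)) · B_{2n}`. -/
theorem rademacher_identity (n : ℕ) (hn : 4 ≤ n) :
    ∑ i ∈ Icc 2 (n - 2),
        ((2 * n - 2).factorial : ℚ) /
            (((2 * i - 2).factorial : ℚ) * ((2 * n - 2 * i - 2).factorial : ℚ)) *
          (bernoulli (2 * i) / (2 * (i : ℚ))) *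
          (bernoulli (2 * n - 2 * i) / (2 * (n : ℚ) - 2 * (i : ℚ))) =
      -((2 * (n : ℚ) + 1) * ((n : ℚ) - 3) / (6 * (n : ℚ))) * bernoulli (2 * n) := by
  obtain ⟨k, rfl⟩ : ∃ k, n = k + 4 := ⟨n - 4, by omega⟩
  have hFm_ne : ((2*k+6).factorial : ℚ) ≠ 0 := by exact_mod_cast (2*k+6).factorial_ne_zero
  -- the sum in the statement equals (Fm/4) * convolution sum
  have hterm : ∀ i ∈ Icc 2 (k+2),
      ((2 * (k+4) - 2).factorial : ℚ) /
            (((2 * i - 2).factorial : ℚ) * ((2 * (k+4) - 2 * i - 2).factorial : ℚ)) *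
          (bernoulli (2 * i) / (2 * (i : ℚ))) *
          (bernoulli (2 * (k+4) - 2 * i) / (2 * ((k + 4 : ℕ) : ℚ) - 2 * (i : ℚ)))
        = ((2*k+6).factorial : ℚ) / 4 *
            (coeff (2*i) (X * G1 - Gps) * coeff (2*k+8-2*i) (X * G1 - Gps)) := by
    intro i hi
    rw [mem_Icc] at hi
    obtain ⟨hi2, hik⟩ := hi
    set j := k + 4 - i with hj
    have hij : i + j = k + 4 := by omega
    have hj2 : 2 ≤ j := by omega
    have e1 : 2 * (k+4) - 2 = 2*k+6 := by omega
    have e2 : 2 * (k+4) - 2 * i = 2 * j := by omega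
    have e3 : 2 * (k+4) - 2 * i - 2 = 2 * j - 2 := by omega
    have e4 : 2*k+8 - 2*i = 2 * j := by omega
    have ecast : 2 * ((k + 4 : ℕ) : ℚ) - 2 * (i:ℚ) = 2 * (j:ℚ) := by
      push_cast
      have : (i:ℚ) + (j:ℚ) = (k:ℚ) + 4 := by exact_mod_cast congrArg (Nat.cast : ℕ → ℚ) hij
      linarith
    rw [e1, e3, e2, e4, ecast, cA, cA, cG (by omega), cG (by omega)]
    -- factorial expansions
    have fi : ((2*i).factorial : ℚ) = (2*(i:ℚ)) * ((2*(i:ℚ)) - 1) * ((2*i-2).factorial : ℚ) := by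
      have h1 : 2*i = (2*i-2) + 1 + 1 := by omega
      have c2 : ((2*i-2 : ℕ) : ℚ) = 2*(i:ℚ) - 2 := by
        rw [Nat.cast_sub (by omega : 2 ≤ 2*i)]; push_cast; ring
      conv_lhs => rw [h1]
      rw [Nat.factorial_succ, Nat.factorial_succ]
      push_cast
      rw [c2]
      ring
    have fj : ((2*j).factorial : ℚ) = (2*(j:ℚ)) * ((2*(j:ℚ)) - 1) * ((2*j-2).factorial : ℚ) := by
      have h1 : 2*j = (2*j-2) + 1 + 1 := by omega
      have c2 : ((2*j-2 : ℕ) : ℚ) = 2*(j:ℚ) - 2 := by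
        rw [Nat.cast_sub (by omega : 2 ≤ 2*j)]; push_cast; ring
      conv_lhs => rw [h1]
      rw [Nat.factorial_succ, Nat.factorial_succ]
      push_cast
      rw [c2]
      ring
    rw [fi, fj]
    have hi0 : (2*(i:ℚ)) ≠ 0 := by positivity
    have hj0 : (2*(j:ℚ)) ≠ 0 := by
      have : (0:ℚ) < (j:ℚ) := by exact_mod_cast (by omega : 0 < j)
      positivity
    have hi1 : (2*(i:ℚ)) - 1 ≠ 0 := by
      have : (2:ℚ) ≤ 2*(i:ℚ) := by exact_mod_cast (by omega : 2 ≤ 2*i)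
      intro h; linarith
    have hj1 : (2*(j:ℚ)) - 1 ≠ 0 := by
      have : (2:ℚ) ≤ 2*(j:ℚ) := by exact_mod_cast (by omega : 2 ≤ 2*j)
      intro h; linarith
    have hfi2 : ((2*i-2).factorial : ℚ) ≠ 0 := by exact_mod_cast (2*i-2).factorial_ne_zero
    have hfj2 : ((2*j-2).factorial : ℚ) ≠ 0 := by exact_mod_cast (2*j-2).factorial_ne_zero
    have ci : ((2*i : ℕ) : ℚ) = 2*(i:ℚ) := by push_cast; ring
    have cj : ((2*j : ℕ) : ℚ) = 2*(j:ℚ) := by push_cast; ring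
    rw [ci, cj]
    field_simp
    ring
  -- value lemmas for the RHS coefficients
  have cGn : coeff (2*k+8) Gps = 2 * bernoulli (2*k+8) / ((2*k+8).factorial : ℚ) :=
    cG (by omega)
  have cGm : coeff (2*k+6) Gps = 2 * bernoulli (2*k+6) / ((2*k+6).factorial : ℚ) :=
    cG (by omega)
  have v1 : coeff (2*k+8) ((X : ℚ⟦X⟧) ^ 3 * G3)
      = coeff (2*k+8) Gps * ((2*(k:ℚ)+8) * ((2*(k:ℚ)+7) * (2*(k:ℚ)+6))) := by
    rw [show 2*k+8 = 2*k+5+3 by omega, coeff_X_pow_mul, PowerSeries.coeff_derivative,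
      PowerSeries.coeff_derivative, PowerSeries.coeff_derivative]
    push_cast
    ring_nf
  have v2 : coeff (2*k+8) ((X : ℚ⟦X⟧) ^ 2 * Gps) = coeff (2*k+6) Gps := by
    rw [show 2*k+8 = 2*k+6+2 by omega, coeff_X_pow_mul]
  have v3 : coeff (2*k+8) ((X : ℚ⟦X⟧) ^ 2 * G2)
      = coeff (2*k+8) Gps * ((2*(k:ℚ)+8) * (2*(k:ℚ)+7)) := by
    rw [show 2*k+8 = 2*k+6+2 by omega, coeff_X_pow_mul, PowerSeries.coeff_derivative,
      PowerSeries.coeff_derivative]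
    push_cast
    ring_nf
  have v4 : coeff (2*k+8) ((X : ℚ⟦X⟧) ^ 3 * G1)
      = coeff (2*k+6) Gps * (2*(k:ℚ)+6) := by
    rw [show 2*k+8 = 2*k+5+3 by omega, coeff_X_pow_mul, PowerSeries.coeff_derivative]
    push_cast
    ring_nf
  have v5 : coeff (2*k+8) ((X : ℚ⟦X⟧) * G1) = coeff (2*k+8) Gps * (2*(k:ℚ)+8) := by
    rw [show 2*k+8 = 2*k+7+1 by omega, coeff_succ_X_mul, PowerSeries.coeff_derivative]
    push_cast
    ring_nf
  have v6 : coeff (2*k+8) ((X : ℚ⟦X⟧) ^ 2) = 0 := by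
    rw [coeff_X_pow, if_neg (by omega)]
  have cA2 : coeff 2 (X * G1 - Gps) = 1/6 := by
    rw [cA, cG (le_refl 2)]
    have : bernoulli 2 = 1/6 := by
      rw [bernoulli_eq_bernoulli'_of_ne_one (by norm_num), bernoulli'_two]
    rw [this]
    norm_num [Nat.factorial]
  have cAm : coeff (2*k+6) (X * G1 - Gps) = (2*(k:ℚ)+5) * coeff (2*k+6) Gps := by
    rw [cA]
    push_cast
    ring
  -- take coefficient 2k+8 of hfin2
  have hc := congrArg (coeff (2*k+8)) hfin2
  simp only [map_add, coeff_C_mul] at hc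
  rw [conv k, v1, v2, v3, v4, v5, v6, cA2, cAm] at hc
  -- solve for the convolution sum
  have hS : (∑ i ∈ Icc 2 (k+2),
        coeff (2*i) (X * G1 - Gps) * coeff (2*k+8-2*i) (X * G1 - Gps))
      = coeff (2*k+8) Gps *
          ((2*(k:ℚ)+8) * (2*(k:ℚ)+7) + 2*(2*(k:ℚ)+8) - 2
            - (2*(k:ℚ)+8) * (2*(k:ℚ)+7) * (2*(k:ℚ)+6) / 3) := by
    linear_combination hc / 6
  -- rewrite the goal sum
  have egoal : k + 4 - 2 = k + 2 := by omega
  rw [egoal, Finset.sum_congr rfl hterm, ← Finset.mul_sum, hS, cGn]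
  -- final arithmetic
  have hF : ((2*k+8).factorial : ℚ) = (2*(k:ℚ)+8) * ((2*(k:ℚ)+7) * ((2*k+6).factorial : ℚ)) := by
    rw [show 2*k+8 = 2*k+6+1+1 by omega, Nat.factorial_succ, Nat.factorial_succ]
    push_cast
    ring
  rw [show 2*(k+4) = 2*k+8 by omega, hF]
  have h1 : (2*(k:ℚ)+8) ≠ 0 := by positivity
  have h2 : (2*(k:ℚ)+7) ≠ 0 := by positivity
  have h3 : ((k:ℚ)+4) ≠ 0 := by positivity
  have h4 : (((k+4:ℕ)):ℚ) = (k:ℚ)+4 := by push_cast; ring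
  rw [h4]
  field_simp
  ring
end
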